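/- Let {θ^r} be a sequence of parameters such that for all 1 ≤ j ≤ k the mixing weights satisfy π_j^r → π_j with π_j > 0, the dispersion matrices satisfy Σ_j^r → Σ_j with Σ_j real symmetric positive definite, and for some 1 ≤ g < k the means satisfy μ_j^r → μ_j ∈ ℝ^p for j ≤ g and ‖μ_j^r‖ → ∞ for j > g. Then for any probability distribution P on ℝ^p, E_P[ Σ_{j=g+1}^k Z_j(X, θ^r) ] → 0 as r → ∞. -/

import Mathlib

/-!
Fix `x`. Since `g ≥ 1`, the first component has a convergent mean, so
`D_1(x, θ^r) → π_1 φ_p(x, μ_1, Σ_1) > 0`. For a component with `‖μ_j^r‖ → ∞`, the matrices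
`(Σ_j^r)⁻¹` converge to the positive definite `Σ_j⁻¹`, hence are eventually uniformly coercive,
`(x - μ_j^r)ᵀ (Σ_j^r)⁻¹ (x - μ_j^r) ≥ c ‖x - μ_j^r‖² → ∞`, and `D_j(x, θ^r) → 0`. So every
divergent component eventually loses the maximum at `x` to the first one: `Z_j(x, θ^r) → 0`
pointwise, and dominated convergence (`0 ≤ Z_j ≤ 1`, `P` finite) gives the claim.
-/

open MeasureTheory Matrix Filter Topology Finset Real

noncomputable section

/-- The `p`-variate normal density `φ_p(x, μ, Σ)`. -/
def mvnpdf (p : ℕ) (x μ : Fin p → ℝ) (S : Matrix (Fin p) (Fin p) ℝ) : ℝ :=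
  (2 * π) ^ (-(p : ℝ) / 2) * S.det ^ (-(1 : ℝ) / 2) *
    Real.exp (-(1 / 2) * ((x - μ) ⬝ᵥ (S⁻¹ *ᵥ (x - μ))))

/-- A (generalized) mixture parameter `θ = (π₁,…,π_k, μ₁,…,μ_k, Σ₁,…,Σ_k)`. -/
abbrev MixParam (p k : ℕ) :=
  (Fin k → ℝ) × (Fin k → Fin p → ℝ) × (Fin k → Matrix (Fin p) (Fin p) ℝ)

/-- `D_j(x, θ) = π_j φ_p(x, μ_j, Σ_j)`. -/
def Dj (p k : ℕ) (θ : MixParam p k) (x : Fin p → ℝ) (j : Fin k) : ℝ :=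
  θ.1 j * mvnpdf p x (θ.2.1 j) (θ.2.2 j)

/-- `D_j(x,θ) = D(x,θ) = max_i D_i(x,θ)`, i.e. the `j`-th component attains the maximum. -/
def IsArgMax (p k : ℕ) (θ : MixParam p k) (x : Fin p → ℝ) (j : Fin k) : Prop :=
  ∀ i, Dj p k θ x i ≤ Dj p k θ x j

open Classical in
/-- The assignment function `Z_j(x,θ) = 1{D_j(x,θ) = D(x,θ)}`. -/
def Zj (p k : ℕ) (θ : MixParam p k) (x : Fin p → ℝ) (j : Fin k) : ℝ :=
  if IsArgMax p k θ x j then 1 else 0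

/-- `∫_{ℝ^p} φ_p(x, μ, Σ)^{1+β} dx`. -/
def Jint (p : ℕ) (β : ℝ) (μ : Fin p → ℝ) (S : Matrix (Fin p) (Fin p) ℝ) : ℝ :=
  ∫ x : Fin p → ℝ, mvnpdf p x μ S ^ (1 + β)

open Classical in
/-- The integrand `m_θ(x)` of the pseudo β-likelihood, with the convention that a summand
is `0` whenever `Z_j(x,θ) = 0`. -/
def mfun (p k : ℕ) (β : ℝ) (θ : MixParam p k) (x : Fin p → ℝ) : ℝ :=
  ∑ j : Fin k,
    if IsArgMax p k θ x j then
      Real.log (θ.1 j) + (1 / β) * mvnpdf p x (θ.2.1 j) (θ.2.2 j) ^ β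
        - (1 / (1 + β)) * Jint p β (θ.2.1 j) (θ.2.2 j)
    else 0

/-- The pseudo β-likelihood `L_β(θ, P) = E_P[m_θ(X)]`. -/
def Lbeta (p k : ℕ) (β : ℝ) (θ : MixParam p k) (P : Measure (Fin p → ℝ)) : ℝ :=
  ∫ x, mfun p k β θ x ∂P

/-- The empirical pseudo β-likelihood `L_β(θ, F_n)` based on observations `xs 0, …, xs (n-1)`. -/
def Lemp (p k : ℕ) (β : ℝ) (θ : MixParam p k) (n : ℕ) (xs : ℕ → Fin p → ℝ) : ℝ :=
  (1 / (n : ℝ)) * ∑ i ∈ Finset.range n, mfun p k β θ (xs i)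

/-- `θ` is a genuine mixture parameter: weights in `[0,1]` summing to `1`, and symmetric
positive definite dispersion matrices. -/
def IsMixParam (p k : ℕ) (θ : MixParam p k) : Prop :=
  (∀ j, 0 ≤ θ.1 j ∧ θ.1 j ≤ 1) ∧ (∑ j, θ.1 j) = 1 ∧ ∀ j, (θ.2.2 j).PosDef

/-- The constrained parameter space `Θ_C`: every eigenvalue of every `Σ_j` is at least `c₁`
(NS constraint) and the ratio of any two eigenvalues is at most `c` (ER constraint `M/m ≤ c`). -/
def InThetaC (p k : ℕ) (c c₁ : ℝ) (θ : MixParam p k) : Prop :=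
  IsMixParam p k θ ∧
    (∀ j (h : (θ.2.2 j).IsHermitian) i, c₁ ≤ h.eigenvalues i) ∧
    (∀ j (h : (θ.2.2 j).IsHermitian) i j' (h' : (θ.2.2 j').IsHermitian) i',
      h.eigenvalues i ≤ c * h'.eigenvalues i')

/-- The `k`-component `p`-variate normal mixture measure `Σ_j w_j N_p(μ_j, Σ_j)`. -/
def mixMeasure (p k : ℕ) (w : Fin k → ℝ) (μ : Fin k → Fin p → ℝ)
    (S : Fin k → Matrix (Fin p) (Fin p) ℝ) : Measure (Fin p → ℝ) :=
  volume.withDensity fun x => ENNReal.ofReal (∑ j, w j * mvnpdf p x (μ j) (S j))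

/-- Assumption 1: `max_j π⁰_j ≥ (1+k⁰) β/(1+β)^{1+p/2}` for some `k⁰ > 0`. -/
def Assumption1 (p k : ℕ) (β : ℝ) (w0 : Fin k → ℝ) : Prop :=
  ∃ k0 > 0, ∃ j0 : Fin k, (∀ j, w0 j ≤ w0 j0) ∧
    (1 + k0) * β / (1 + β) ^ (1 + (p : ℝ) / 2) ≤ w0 j0

/-- The Euclidean distance on the parameter space
`ℝ^k × (ℝ^p)^k × (ℝ^{p×p})^k`. -/
def paramDist (p k : ℕ) (θ θ' : MixParam p k) : ℝ :=
  Real.sqrt ((∑ j, (θ.1 j - θ'.1 j) ^ 2) + (∑ j, ∑ i, (θ.2.1 j i - θ'.2.1 j i) ^ 2)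
    + (∑ j, ∑ i, ∑ i', (θ.2.2 j i i' - θ'.2.2 j i i') ^ 2))

end

section QuadraticForm

variable {n : Type*} [Fintype n]

theorem abs_dotProduct_mulVec_le (B : Matrix n n ℝ) (v : n → ℝ) :
    |v ⬝ᵥ B *ᵥ v| ≤ (∑ i, ∑ j, |B i j|) * ∑ i, v i ^ 2 := by
  set N := ∑ i, v i ^ 2
  have hv : ∀ i, |v i| ≤ √N := fun i =>
    Real.abs_le_sqrt (Finset.single_le_sum (fun l _ => sq_nonneg (v l)) (Finset.mem_univ i))
  have hvv : ∀ i j, |v i * v j| ≤ N := fun i j => calc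
    |v i * v j| = |v i| * |v j| := abs_mul _ _
    _ ≤ √N * √N := mul_le_mul (hv i) (hv j) (abs_nonneg _) (Real.sqrt_nonneg _)
    _ = N := Real.mul_self_sqrt (Finset.sum_nonneg fun l _ => sq_nonneg (v l))
  calc |v ⬝ᵥ B *ᵥ v| = |∑ i, ∑ j, B i j * (v i * v j)| := by
        simp only [dotProduct, mulVec, Finset.mul_sum]
        congr 1; refine Finset.sum_congr rfl fun i _ => Finset.sum_congr rfl fun j _ => ?_
        ring
    _ ≤ ∑ i, ∑ j, |B i j| * N := by
        refine (Finset.abs_sum_le_sum_abs _ _).trans (Finset.sum_le_sum fun i _ => ?_)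
        refine (Finset.abs_sum_le_sum_abs _ _).trans (Finset.sum_le_sum fun j _ => ?_)
        rw [abs_mul]
        exact mul_le_mul_of_nonneg_left (hvv i j) (abs_nonneg _)
    _ = (∑ i, ∑ j, |B i j|) * N := by simp only [Finset.sum_mul]

theorem Matrix.PosDef.exists_pos_mul_sum_sq_le {A : Matrix n n ℝ} (hA : A.PosDef) :
    ∃ c > 0, ∀ v : n → ℝ, c * ∑ i, v i ^ 2 ≤ v ⬝ᵥ A *ᵥ v := by
  cases isEmpty_or_nonempty n
  · exact ⟨1, one_pos, fun v => by simp⟩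
  let Q : EuclideanSpace ℝ n → ℝ := fun u => u.ofLp ⬝ᵥ A *ᵥ u.ofLp
  have hQ : Continuous Q := by
    simp only [Q, dotProduct, mulVec]
    fun_prop
  have hQ_smul : ∀ (a : ℝ) u, Q (a • u) = a ^ 2 * Q u := fun a u => by
    simp only [Q, WithLp.ofLp_smul, mulVec_smul, smul_dotProduct, dotProduct_smul, smul_eq_mul]
    ring
  obtain ⟨u, hu, hmin⟩ := (isCompact_sphere (0 : EuclideanSpace ℝ n) 1).exists_isMinOn
    (NormedSpace.sphere_nonempty.mpr zero_le_one) hQ.continuousOn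
  have hu0 : u.ofLp ≠ 0 := fun h => by
    simp [show u = 0 from WithLp.ofLp_injective 2 h] at hu
  refine ⟨Q u, hA.dotProduct_mulVec_pos hu0, fun v => ?_⟩
  obtain rfl | hv := eq_or_ne v 0
  · simp
  set w : EuclideanSpace ℝ n := WithLp.toLp 2 v
  have hw : 0 < ‖w‖ := norm_pos_iff.mpr fun h => hv (by simpa [w] using congrArg WithLp.ofLp h)
  have hsum : ∑ i, v i ^ 2 = ‖w‖ ^ 2 := (EuclideanSpace.real_norm_sq_eq w).symm
  have hsph : ‖w‖⁻¹ • w ∈ Metric.sphere (0 : EuclideanSpace ℝ n) 1 := by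
    simp [norm_smul, inv_mul_cancel₀ hw.ne']
  have hle : Q u ≤ ‖w‖⁻¹ ^ 2 * Q w := hQ_smul _ w ▸ hmin hsph
  rw [hsum]
  calc Q u * ‖w‖ ^ 2 ≤ ‖w‖⁻¹ ^ 2 * Q w * ‖w‖ ^ 2 := by gcongr
    _ = Q w := by field_simp

theorem Matrix.PosDef.exists_pos_eventually_mul_sum_sq_le {A : Matrix n n ℝ} (hA : A.PosDef) :
    ∃ c > 0, ∀ᶠ B in 𝓝 A, ∀ v : n → ℝ, c * ∑ i, v i ^ 2 ≤ v ⬝ᵥ B *ᵥ v := by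
  obtain ⟨c, hc, hAc⟩ := hA.exists_pos_mul_sum_sq_le
  have hnear : ∀ᶠ B in 𝓝 A, ∑ i, ∑ j, |(B - A) i j| < c / 2 := by
    have hcont : Continuous fun B : Matrix n n ℝ => ∑ i, ∑ j, |(B - A) i j| := by
      simp only [sub_apply]; fun_prop
    exact hcont.continuousAt.eventually_lt continuousAt_const (by simpa using half_pos hc)
  refine ⟨c / 2, half_pos hc, hnear.mono fun B hB v => ?_⟩
  have hsplit : v ⬝ᵥ B *ᵥ v = v ⬝ᵥ A *ᵥ v + v ⬝ᵥ (B - A) *ᵥ v := by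
    rw [sub_mulVec, dotProduct_sub]; ring
  have herr : |v ⬝ᵥ (B - A) *ᵥ v| ≤ c / 2 * ∑ i, v i ^ 2 :=
    (abs_dotProduct_mulVec_le _ v).trans
      (mul_le_mul_of_nonneg_right hB.le (Finset.sum_nonneg fun i _ => sq_nonneg _))
  linarith [hAc v, (abs_le.mp herr).1]

theorem tendsto_dotProduct_mulVec_atTop {ι : Type*} {l : Filter ι} {A : Matrix n n ℝ}
    (hA : A.PosDef) {B : ι → Matrix n n ℝ} {v : ι → n → ℝ} (hB : Tendsto B l (𝓝 A))
    (hv : Tendsto (fun r => ∑ i, v r i ^ 2) l atTop) :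
    Tendsto (fun r => v r ⬝ᵥ B r *ᵥ v r) l atTop := by
  obtain ⟨c, hc, hBc⟩ := hA.exists_pos_eventually_mul_sum_sq_le
  exact tendsto_atTop_mono' l ((hB.eventually hBc).mono fun r h => h (v r))
    (hv.const_mul_atTop hc)

end QuadraticForm

theorem Filter.Tendsto.matrix_inv {ι K n : Type*} [Field K] [TopologicalSpace K]
    [IsTopologicalDivisionRing K] [Fintype n] [DecidableEq n] {l : Filter ι}
    {A : ι → Matrix n n K} {A₀ : Matrix n n K} (hA : Tendsto A l (𝓝 A₀)) (h : A₀.det ≠ 0) :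
    Tendsto (fun r => (A r)⁻¹) l (𝓝 A₀⁻¹) := by
  have hdet : ContinuousAt Ring.inverse A₀.det :=
    Ring.inverse_eq_inv' (G₀ := K) ▸ continuousAt_inv₀ h
  exact (continuousAt_matrix_inv A₀ hdet).tendsto.comp hA

section NormalDensity

variable {p : ℕ} {ι : Type*} {l : Filter ι}

theorem mvnpdf_pos (x μ : Fin p → ℝ) {S : Matrix (Fin p) (Fin p) ℝ} (hS : S.PosDef) :
    0 < mvnpdf p x μ S := by
  have := hS.det_pos
  unfold mvnpdf
  positivity

theorem continuous_mvnpdf (μ : Fin p → ℝ) (S : Matrix (Fin p) (Fin p) ℝ) :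
    Continuous fun x => mvnpdf p x μ S := by
  unfold mvnpdf
  fun_prop

theorem tendsto_sum_sq_sub_atTop {n : Type*} [Fintype n] (x : n → ℝ) {μ : ι → n → ℝ}
    (hμ : Tendsto (fun r => √(∑ i, μ r i ^ 2)) l atTop) :
    Tendsto (fun r => ∑ i, (x i - μ r i) ^ 2) l atTop := by
  have hnorm : ∀ v : n → ℝ, √(∑ i, v i ^ 2) = ‖WithLp.toLp 2 v‖ := fun v => by
    simp [EuclideanSpace.norm_eq]
  simp only [hnorm] at hμ
  have hdist : Tendsto (fun r => ‖WithLp.toLp 2 (x - μ r)‖) l atTop := by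
    refine tendsto_atTop_mono (fun r => ?_)
      (tendsto_atTop_add_const_right _ (-‖WithLp.toLp 2 x‖) hμ)
    rw [WithLp.toLp_sub, norm_sub_rev]
    linarith [norm_sub_norm_le (WithLp.toLp 2 (μ r)) (WithLp.toLp 2 x)]
  refine ((tendsto_pow_atTop two_ne_zero).comp hdist).congr fun r => ?_
  simp [EuclideanSpace.real_norm_sq_eq]

theorem tendsto_mvnpdf {μr : ι → Fin p → ℝ} {Sr : ι → Matrix (Fin p) (Fin p) ℝ}
    {μ : Fin p → ℝ} {S : Matrix (Fin p) (Fin p) ℝ} (hS : S.PosDef) (hμr : Tendsto μr l (𝓝 μ))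
    (hSr : Tendsto Sr l (𝓝 S)) (x : Fin p → ℝ) :
    Tendsto (fun r => mvnpdf p x (μr r) (Sr r)) l (𝓝 (mvnpdf p x μ S)) := by
  have hquad : Tendsto (fun r => (x - μr r) ⬝ᵥ (Sr r)⁻¹ *ᵥ (x - μr r)) l
      (𝓝 ((x - μ) ⬝ᵥ S⁻¹ *ᵥ (x - μ))) :=
    ((continuous_fst.dotProduct (continuous_snd.matrix_mulVec continuous_fst)).tendsto _).comp
      ((tendsto_const_nhds.sub hμr).prodMk_nhds (hSr.matrix_inv hS.det_pos.ne'))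
  have hdet := (((continuous_id.matrix_det).tendsto S).comp hSr).rpow_const
    (p := -(1 : ℝ) / 2) (Or.inl hS.det_pos.ne')
  exact (tendsto_const_nhds.mul hdet).mul
    ((Real.continuous_exp.tendsto _).comp (tendsto_const_nhds.mul hquad))

theorem tendsto_mvnpdf_zero_of_tendsto_atTop {μr : ι → Fin p → ℝ}
    {Sr : ι → Matrix (Fin p) (Fin p) ℝ} {S : Matrix (Fin p) (Fin p) ℝ} (hS : S.PosDef)
    (hSr : Tendsto Sr l (𝓝 S)) (hμr : Tendsto (fun r => √(∑ i, μr r i ^ 2)) l atTop)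
    (x : Fin p → ℝ) :
    Tendsto (fun r => mvnpdf p x (μr r) (Sr r)) l (𝓝 0) := by
  have hquad : Tendsto (fun r => (x - μr r) ⬝ᵥ (Sr r)⁻¹ *ᵥ (x - μr r)) l atTop :=
    tendsto_dotProduct_mulVec_atTop hS.inv (hSr.matrix_inv hS.det_pos.ne')
      (tendsto_sum_sq_sub_atTop x hμr)
  have hdet := (((continuous_id.matrix_det).tendsto S).comp hSr).rpow_const
    (p := -(1 : ℝ) / 2) (Or.inl hS.det_pos.ne')
  have hexp := Real.tendsto_exp_atBot.comp
    (hquad.const_mul_atTop_of_neg (by norm_num : -(1 / 2 : ℝ) < 0))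
  have h := ((tendsto_const_nhds (x := (2 * π) ^ (-(p : ℝ) / 2))).mul hdet).mul hexp
  rw [mul_zero] at h
  exact h

end NormalDensity

section Assignment

variable {p k : ℕ} {ι : Type*} {l : Filter ι}

theorem norm_Zj_le_one (θ : MixParam p k) (x : Fin p → ℝ) (j : Fin k) : ‖Zj p k θ x j‖ ≤ 1 := by
  unfold Zj; split_ifs <;> norm_num

theorem Zj_eq_zero_of_Dj_lt {θ : MixParam p k} {x : Fin p → ℝ} {i j : Fin k}
    (h : Dj p k θ x j < Dj p k θ x i) : Zj p k θ x j = 0 :=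
  if_neg fun hmax => (hmax i).not_gt h

theorem measurable_Zj (θ : MixParam p k) (j : Fin k) : Measurable fun x => Zj p k θ x j := by
  have hD : ∀ i, Continuous fun x => Dj p k θ x i := fun i =>
    continuous_const.mul (continuous_mvnpdf _ _)
  have hset : MeasurableSet {x | IsArgMax p k θ x j} := by
    simp only [IsArgMax, Set.ofPred_forall]
    exact MeasurableSet.iInter fun i => measurableSet_le (hD i).measurable (hD j).measurable
  exact Measurable.ite hset measurable_const measurable_const

theorem integrable_Zj (P : Measure (Fin p → ℝ)) [IsFiniteMeasure P] (θ : MixParam p k)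
    (j : Fin k) : Integrable (fun x => Zj p k θ x j) P :=
  Integrable.of_bound (measurable_Zj θ j).aestronglyMeasurable 1 <|
    ae_of_all _ fun x => norm_Zj_le_one θ x j

theorem eventually_Zj_eq_zero {θ : ι → MixParam p k} {x : Fin p → ℝ} {i j : Fin k} {L : ℝ}
    (hL : 0 < L) (hi : Tendsto (fun r => Dj p k (θ r) x i) l (𝓝 L))
    (hj : Tendsto (fun r => Dj p k (θ r) x j) l (𝓝 0)) :
    ∀ᶠ r in l, Zj p k (θ r) x j = 0 :=
  (hj.eventually_lt hi hL).mono fun _ h => Zj_eq_zero_of_Dj_lt h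

theorem tendsto_integral_Zj_zero [l.IsCountablyGenerated] (P : Measure (Fin p → ℝ))
    [IsFiniteMeasure P] {θ : ι → MixParam p k} {j : Fin k}
    (h : ∀ x, ∀ᶠ r in l, Zj p k (θ r) x j = 0) :
    Tendsto (fun r => ∫ x, Zj p k (θ r) x j ∂P) l (𝓝 0) := by
  have hdom := tendsto_integral_filter_of_dominated_convergence (μ := P) (fun _ => 1)
    (.of_forall fun r => (measurable_Zj (θ r) j).aestronglyMeasurable)
    (.of_forall fun r => ae_of_all _ fun x => norm_Zj_le_one (θ r) x j)
    (integrable_const 1)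
    (ae_of_all _ fun x => tendsto_const_nhds.congr' ((h x).mono fun _ => Eq.symm))
  simpa only [integral_zero] using hdom

end Assignment

theorem expected_assignment_of_divergent_components_tendsto_zero_general
    (p k : ℕ)
    (θseq : ℕ → MixParam p k)
    -- mixing weights converge to strictly positive limits
    (wlim : Fin k → ℝ)
    (hw : ∀ j, Tendsto (fun r => (θseq r).1 j) atTop (𝓝 (wlim j)))
    (hwpos : ∀ j, 0 < wlim j)
    -- dispersion matrices converge to symmetric positive definite limits
    (Slim : Fin k → Matrix (Fin p) (Fin p) ℝ) (hSpd : ∀ j, (Slim j).PosDef)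
    (hS : ∀ j, Tendsto (fun r => (θseq r).2.2 j) atTop (𝓝 (Slim j)))
    -- the first g mean sequences converge, the remaining ones diverge in Euclidean norm
    (g : ℕ) (hg1 : 1 ≤ g) (hg2 : g < k)
    (mulim : Fin k → Fin p → ℝ)
    (hmu1 : ∀ j : Fin k, (j : ℕ) < g →
      Tendsto (fun r => (θseq r).2.1 j) atTop (𝓝 (mulim j)))
    (hmu2 : ∀ j : Fin k, g ≤ (j : ℕ) →
      Tendsto (fun r => Real.sqrt (∑ i, ((θseq r).2.1 j i) ^ 2)) atTop atTop)
    (P : Measure (Fin p → ℝ)) [IsProbabilityMeasure P] :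
    Tendsto
      (fun r => ∫ x, (∑ j : Fin k, if g ≤ (j : ℕ) then Zj p k (θseq r) x j else 0) ∂P)
      atTop (𝓝 0) := by
  let i₀ : Fin k := ⟨0, by omega⟩
  have hi₀ (x : Fin p → ℝ) : Tendsto (fun r => Dj p k (θseq r) x i₀) atTop
      (𝓝 (wlim i₀ * mvnpdf p x (mulim i₀) (Slim i₀))) :=
    (hw i₀).mul (tendsto_mvnpdf (hSpd i₀) (hmu1 i₀ hg1) (hS i₀) x)
  have hdiv (x : Fin p → ℝ) (j : Fin k) (hj : g ≤ (j : ℕ)) :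
      Tendsto (fun r => Dj p k (θseq r) x j) atTop (𝓝 0) := by
    have h := (hw j).mul (tendsto_mvnpdf_zero_of_tendsto_atTop (hSpd j) (hS j) (hmu2 j hj) x)
    rwa [mul_zero] at h
  simp_rw [← Finset.sum_filter, integral_finsetSum _ fun j _ => integrable_Zj P (θseq _) j]
  simpa using tendsto_finsetSum _ fun j hj => tendsto_integral_Zj_zero P fun x =>
    eventually_Zj_eq_zero (mul_pos (hwpos i₀) (mvnpdf_pos x _ (hSpd i₀))) (hi₀ x)
      (hdiv x j (Finset.mem_filter.mp hj).2)

/-- the expected total mass assigned to the divergent components tends to 0: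
`E_P[Σ_{j=g+1}^k Z_j(X, θ^r)] → 0`. -/
theorem expected_assignment_of_divergent_components_tendsto_zero
    (p k : ℕ) (hp : 0 < p) (hk : 0 < k)
    (θseq : ℕ → MixParam p k)
    (hparam : ∀ r, IsMixParam p k (θseq r))
    -- mixing weights converge to strictly positive limits
    (wlim : Fin k → ℝ)
    (hw : ∀ j, Tendsto (fun r => (θseq r).1 j) atTop (𝓝 (wlim j)))
    (hwpos : ∀ j, 0 < wlim j)
    -- dispersion matrices converge to symmetric positive definite limits
    (Slim : Fin k → Matrix (Fin p) (Fin p) ℝ) (hSpd : ∀ j, (Slim j).PosDef)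
    (hS : ∀ j, Tendsto (fun r => (θseq r).2.2 j) atTop (𝓝 (Slim j)))
    -- the first g mean sequences converge, the remaining ones diverge in Euclidean norm
    (g : ℕ) (hg1 : 1 ≤ g) (hg2 : g < k)
    (mulim : Fin k → Fin p → ℝ)
    (hmu1 : ∀ j : Fin k, (j : ℕ) < g →
      Tendsto (fun r => (θseq r).2.1 j) atTop (𝓝 (mulim j)))
    (hmu2 : ∀ j : Fin k, g ≤ (j : ℕ) →
      Tendsto (fun r => Real.sqrt (∑ i, ((θseq r).2.1 j i) ^ 2)) atTop atTop)
    (P : Measure (Fin p → ℝ)) [IsProbabilityMeasure P] :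
    Tendsto
      (fun r => ∫ x, (∑ j : Fin k, if g ≤ (j : ℕ) then Zj p k (θseq r) x j else 0) ∂P)
      atTop (𝓝 0) :=
  expected_assignment_of_divergent_components_tendsto_zero_general p k θseq wlim hw hwpos Slim hSpd
    hS g hg1 hg2 mulim hmu1 hmu2 P
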